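/- arXiv:2505.06555 — 4 statements merged into one kernel-verified Lean document; each statement's English description precedes it below -/
import Mathlib

section
/- Let p, q ∈ ℍ with q ∉ [p]. Then q² − 2(Re p)·q + |p|² ≠ 0 and p² − 2(Re q)·p + |q|² ≠ 0, and the two forms of the left and of the right slice hyperholomorphic Cauchy kernel coincide: (q² − 2(Re p)·q + |p|²)⁻¹·(p̄ − q) = (p − q̄)·(p² − 2(Re q)·p + |q|²)⁻¹, and (p̄ − q)·(q² − 2(Re p)·q + |p|²)⁻¹ = (p² − 2(Re q)·p + |q|²)⁻¹·(p − q̄). -/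
noncomputable section
open Quaternion

/-- The 2-sphere `[p] = {Re p + J·|Im p| : J ∈ 𝕊}` associated with `p ∈ ℍ`. -/
def sphereOf (p : ℍ[ℝ]) : Set ℍ[ℝ] :=
  {x | ∃ J : ℍ[ℝ], J.re = 0 ∧ ‖J‖ = 1 ∧ x = (p.re : ℍ[ℝ]) + ‖Quaternion.im p‖ • J}

lemma normq (a : ℍ[ℝ]) : ((‖a‖^2 : ℝ) : ℍ[ℝ]) = (normSq a : ℝ) := by
  rw [sq, ← normSq_eq_norm_mul_self]

lemma normq' (a : ℍ[ℝ]) : (‖a‖^2 : ℝ) = normSq a := by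
  rw [sq, ← normSq_eq_norm_mul_self]

lemma two_coe (r : ℝ) : (2 : ℍ[ℝ]) * (r : ℍ[ℝ]) = ((2*r : ℝ) : ℍ[ℝ]) := by
  rw [Quaternion.coe_mul, show ((2:ℝ):ℍ[ℝ]) = 2 by exact_mod_cast Quaternion.coe_natCast 2]

lemma key (p q : ℍ[ℝ]) :
    (q ^ 2 - 2 * (p.re : ℍ[ℝ]) * q + ((‖p‖ ^ 2 : ℝ) : ℍ[ℝ])) * (p - star q) =
      (star p - q) * (p ^ 2 - 2 * (q.re : ℍ[ℝ]) * p + ((‖q‖ ^ 2 : ℝ) : ℍ[ℝ])) := by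
  rw [normq, normq, two_coe, two_coe]
  ext <;>
    simp only [pow_two, Quaternion.normSq_def', Quaternion.re_mul, Quaternion.imI_mul,
      Quaternion.imJ_mul, Quaternion.imK_mul, Quaternion.re_star, Quaternion.imI_star,
      Quaternion.imJ_star, Quaternion.imK_star, Quaternion.re_sub, Quaternion.imI_sub,
      Quaternion.imJ_sub, Quaternion.imK_sub, Quaternion.re_add, Quaternion.imI_add,
      Quaternion.imJ_add, Quaternion.imK_add, Quaternion.re_coe, Quaternion.imI_coe,
      Quaternion.imJ_coe, Quaternion.imK_coe] <;> ring

def e1 : ℍ[ℝ] := ⟨0, 1, 0, 0⟩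

lemma norm_im_sq (x : ℍ[ℝ]) : ‖x.im‖^2 = x.imI^2 + x.imJ^2 + x.imK^2 := by
  rw [normq', Quaternion.normSq_def']
  simp

lemma char (x y : ℍ[ℝ]) (h : x ^ 2 - 2 * (y.re : ℍ[ℝ]) * x + ((‖y‖ ^ 2 : ℝ) : ℍ[ℝ]) = 0) :
    x.re = y.re ∧ ‖x.im‖ = ‖y.im‖ := by
  rw [normq, two_coe] at h
  rw [Quaternion.ext_iff] at h
  simp only [pow_two, Quaternion.normSq_def', Quaternion.re_mul, Quaternion.imI_mul,
    Quaternion.imJ_mul, Quaternion.imK_mul, Quaternion.re_sub, Quaternion.imI_sub,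
    Quaternion.imJ_sub, Quaternion.imK_sub, Quaternion.re_add, Quaternion.imI_add,
    Quaternion.imJ_add, Quaternion.imK_add, Quaternion.re_coe, Quaternion.imI_coe,
    Quaternion.imJ_coe, Quaternion.imK_coe, Quaternion.re_zero, Quaternion.imI_zero,
    Quaternion.imJ_zero, Quaternion.imK_zero] at h
  obtain ⟨h0, h1, h2, h3⟩ := h
  have hre : x.re = y.re := by
    by_contra hne
    have hI : x.imI = 0 := by
      rcases mul_eq_zero.mp (show (x.re - y.re) * x.imI = 0 by linarith) with h | h
      · exact absurd (by linarith [sub_eq_zero.mp h]) hne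
      · exact h
    have hJ : x.imJ = 0 := by
      rcases mul_eq_zero.mp (show (x.re - y.re) * x.imJ = 0 by linarith) with h | h
      · exact absurd (by linarith [sub_eq_zero.mp h]) hne
      · exact h
    have hK : x.imK = 0 := by
      rcases mul_eq_zero.mp (show (x.re - y.re) * x.imK = 0 by linarith) with h | h
      · exact absurd (by linarith [sub_eq_zero.mp h]) hne
      · exact h
    have : (x.re - y.re)^2 + (y.imI^2 + y.imJ^2 + y.imK^2) = 0 := by
      rw [hI, hJ, hK] at h0; ring_nf; ring_nf at h0; nlinarith [h0]
    have hxy : x.re - y.re ≠ 0 := sub_ne_zero.mpr hne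
    nlinarith [sq_nonneg (x.re - y.re), sq_nonneg y.imI, sq_nonneg y.imJ, sq_nonneg y.imK,
      pow_pos (abs_pos.mpr hxy) 2, sq_abs (x.re - y.re)]
  refine ⟨hre, ?_⟩
  have hsq : ‖x.im‖^2 = ‖y.im‖^2 := by
    rw [norm_im_sq, norm_im_sq]; nlinarith [h0, hre]
  exact (sq_eq_sq₀ (norm_nonneg _) (norm_nonneg _)).mp hsq

lemma mem_of (p x : ℍ[ℝ]) (h1 : x.re = p.re) (h2 : ‖x.im‖ = ‖p.im‖) : x ∈ sphereOf p := by
  by_cases him : x.im = 0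
  · refine ⟨e1, rfl, ?_, ?_⟩
    · have : ‖e1‖^2 = 1 := by rw [normq', Quaternion.normSq_def']; norm_num [e1]
      nlinarith [norm_nonneg e1]
    · have hp : ‖p.im‖ = 0 := by rw [← h2, him, norm_zero]
      rw [hp, zero_smul, add_zero, ← h1, ← Quaternion.re_add_im x, him, add_zero]
      simp
  · refine ⟨‖x.im‖⁻¹ • x.im, by simp, ?_, ?_⟩
    · rw [norm_smul, norm_inv, norm_norm, inv_mul_cancel₀ (norm_ne_zero_iff.mpr him)]
    · rw [← h2, smul_smul, mul_inv_cancel₀ (norm_ne_zero_iff.mpr him), one_smul, ← h1,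
        Quaternion.re_add_im]

/-- The two forms of the left and right slice hyperholomorphic Cauchy kernels coincide
for `q ∉ [p]`. -/
theorem two_forms_of_slice_cauchy_kernel (p q : ℍ[ℝ]) (hq : q ∉ sphereOf p) :
    q ^ 2 - 2 * (p.re : ℍ[ℝ]) * q + ((‖p‖ ^ 2 : ℝ) : ℍ[ℝ]) ≠ 0 ∧
    p ^ 2 - 2 * (q.re : ℍ[ℝ]) * p + ((‖q‖ ^ 2 : ℝ) : ℍ[ℝ]) ≠ 0 ∧
    (q ^ 2 - 2 * (p.re : ℍ[ℝ]) * q + ((‖p‖ ^ 2 : ℝ) : ℍ[ℝ]))⁻¹ * (star p - q) =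
      (p - star q) * (p ^ 2 - 2 * (q.re : ℍ[ℝ]) * p + ((‖q‖ ^ 2 : ℝ) : ℍ[ℝ]))⁻¹ ∧
    (star p - q) * (q ^ 2 - 2 * (p.re : ℍ[ℝ]) * q + ((‖p‖ ^ 2 : ℝ) : ℍ[ℝ]))⁻¹ =
      (p ^ 2 - 2 * (q.re : ℍ[ℝ]) * p + ((‖q‖ ^ 2 : ℝ) : ℍ[ℝ]))⁻¹ * (p - star q) := by
  set A := q ^ 2 - 2 * (p.re : ℍ[ℝ]) * q + ((‖p‖ ^ 2 : ℝ) : ℍ[ℝ]) with hA_def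
  set B := p ^ 2 - 2 * (q.re : ℍ[ℝ]) * p + ((‖q‖ ^ 2 : ℝ) : ℍ[ℝ]) with hB_def
  have hA : A ≠ 0 := fun h0 => hq (mem_of p q (char q p h0).1 (char q p h0).2)
  have hB : B ≠ 0 := fun h0 => hq (mem_of p q (char p q h0).1.symm (char p q h0).2.symm)
  have K1 : A * (p - star q) = (star p - q) * B := key p q
  have K2 : B * (star p - q) = (p - star q) * A := by
    have h := key q p
    calc B * (star p - q) = -(B * (q - star p)) := by rw [← mul_neg, neg_sub]
      _ = -((star q - p) * A) := by rw [h]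
      _ = (p - star q) * A := by rw [← neg_mul, neg_sub]
  refine ⟨hA, hB, ?_, ?_⟩
  · apply mul_left_cancel₀ hA
    rw [← mul_assoc, ← mul_assoc, mul_inv_cancel₀ hA, one_mul, K1, mul_assoc,
      mul_inv_cancel₀ hB, mul_one]
  · apply mul_left_cancel₀ hB
    rw [← mul_assoc, ← mul_assoc, mul_inv_cancel₀ hB, one_mul, K2, mul_assoc,
      mul_inv_cancel₀ hA, mul_one]
end
end

section
/- Let I ∈ 𝕊 and p ∈ ℂ_I := {x + I·y : x, y ∈ ℝ}. For n ∈ ℕ set Tₙ(q) := ∑_{k=0}^{n} binom(n,k)·(−1)ᵏ·qᵏ·(1 + p)^{n−k} (the star power (1 − q + p)^{*n}). Suppose q ∈ ℍ satisfies either (a) q ∈ ℂ_I and |q − (p+1)| < 1, or (b) q = x + J·y for some J ∈ 𝕊 and x, y ∈ ℝ with |x + I·y − (p+1)| < 1 and |x − I·y − (p+1)| < 1. Then q ∉ [p] (so q² − 2(Re p)·q + |p|² ≠ 0), the series ∑_{n=0}^{∞} Tₙ(q) converges absolutely in ℍ, and its sum equals (q² − 2(Re p)·q + |p|²)⁻¹·(q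 − p̄), i.e. minus the left slice hyperholomorphic Cauchy kernel S_L⁻¹(p,q). -/
noncomputable section
open Quaternion

lemma unit_mul_self {I : ℍ[ℝ]} (h1 : I.re = 0) (h2 : ‖I‖ = 1) : I * I = -1 := by
  have hs : star I = -I := by
    rw [Quaternion.star_eq_two_re_sub, h1]; simp
  have h := Quaternion.self_mul_star I
  rw [hs, Quaternion.normSq_eq_norm_mul_self, h2, mul_neg, one_mul] at h
  have h3 : I * I = - ((1:ℝ) : ℍ[ℝ]) := by rw [← h, neg_neg]
  simpa using h3

def emb (I : ℍ[ℝ]) (z : ℂ) : ℍ[ℝ] := (z.re : ℍ[ℝ]) + z.im • I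

lemma emb_add (I : ℍ[ℝ]) (z w : ℂ) : emb I (z + w) = emb I z + emb I w := by
  simp only [emb, Complex.add_re, Complex.add_im, add_smul]; push_cast; abel

lemma emb_one (I : ℍ[ℝ]) : emb I 1 = 1 := by simp [emb]

lemma emb_ofReal (I : ℍ[ℝ]) (r : ℝ) : emb I (r : ℂ) = (r : ℍ[ℝ]) := by simp [emb]

lemma emb_smul (I : ℍ[ℝ]) (r : ℝ) (z : ℂ) : emb I (r • z) = r • emb I z := by
  simp [emb, smul_add, smul_smul, Complex.real_smul, Complex.mul_re, Complex.mul_im,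
    Quaternion.coe_mul_eq_smul]

lemma emb_mul {I : ℍ[ℝ]} (hI : I * I = -1) (z w : ℂ) :
    emb I (z * w) = emb I z * emb I w := by
  simp only [emb, Complex.mul_re, Complex.mul_im]
  rw [add_mul, mul_add, mul_add, smul_mul_assoc, smul_mul_assoc, mul_smul_comm,
    mul_smul_comm, smul_smul, hI]
  push_cast
  rw [Quaternion.coe_mul_eq_smul, Quaternion.coe_mul_eq_smul]
  rw [Quaternion.coe_mul_eq_smul, Quaternion.mul_coe_eq_smul, smul_neg,
    show ((w.im:ℝ):ℍ[ℝ]) = w.im • 1 by rw [← Quaternion.coe_mul_eq_smul, mul_one]]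
  module

lemma emb_sub (I : ℍ[ℝ]) (z w : ℂ) : emb I (z - w) = emb I z - emb I w := by
  simp only [emb, Complex.sub_re, Complex.sub_im, sub_smul]; push_cast; abel

lemma emb_neg (I : ℍ[ℝ]) (z : ℂ) : emb I (-z) = - emb I z := by
  simp only [emb, Complex.neg_re, Complex.neg_im, neg_smul]; push_cast; abel

lemma emb_pow {I : ℍ[ℝ]} (hI : I * I = -1) (z : ℂ) (n : ℕ) :
    emb I (z ^ n) = emb I z ^ n := by
  induction n with
  | zero => simpa using emb_one I
  | succ n ih => rw [pow_succ, pow_succ, emb_mul hI, ih]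

lemma emb_inv {I : ℍ[ℝ]} (hI : I * I = -1) (z : ℂ) :
    emb I z⁻¹ = (emb I z)⁻¹ := by
  rcases eq_or_ne z 0 with h | h
  · simp [h, emb]
  · symm
    apply inv_eq_of_mul_eq_one_right
    rw [← emb_mul hI, mul_inv_cancel₀ h, emb_one]

lemma emb_re {I : ℍ[ℝ]} (h1 : I.re = 0) (z : ℂ) : (emb I z).re = z.re := by
  simp [emb, h1]

lemma emb_im {I : ℍ[ℝ]} (h1 : I.re = 0) (z : ℂ) :
    Quaternion.im (emb I z) = z.im • I := by
  ext <;> simp [emb, QuaternionAlgebra.re_im, QuaternionAlgebra.imI_im, QuaternionAlgebra.imJ_im, QuaternionAlgebra.imK_im, h1]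

lemma star_emb {I : ℍ[ℝ]} (h1 : I.re = 0) (z : ℂ) :
    star (emb I z) = emb I (starRingEnd ℂ z) := by
  have hs : star I = -I := by rw [Quaternion.star_eq_two_re_sub, h1]; simp
  simp [emb, Quaternion.star_smul, hs]

lemma norm_emb {I : ℍ[ℝ]} (h1 : I.re = 0) (h2 : ‖I‖ = 1) (z : ℂ) :
    ‖emb I z‖ = ‖z‖ := by
  have hn : normSq (emb I z) = Complex.normSq z := by
    have hIn : I.re^2 + I.imI^2 + I.imJ^2 + I.imK^2 = 1 := by
      have := Quaternion.normSq_eq_norm_mul_self I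
      rw [h2, mul_one] at this
      rw [← Quaternion.normSq_def', this]
    rw [h1] at hIn
    simp only [emb, Quaternion.normSq_def', Complex.normSq_apply]
    simp [h1]
    nlinarith [hIn]
  have h3 : ‖emb I z‖^2 = ‖z‖^2 := by
    rw [sq, sq, ← Quaternion.normSq_eq_norm_mul_self, hn, Complex.normSq_eq_norm_sq, sq]
  rw [← Real.sqrt_sq (norm_nonneg (emb I z)), h3, Real.sqrt_sq (norm_nonneg z)]

lemma emb_injective {I : ℍ[ℝ]} (h1 : I.re = 0) (h2 : ‖I‖ = 1) :
    Function.Injective (emb I) := by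
  intro z w h
  have := congrArg norm (congrArg (· - emb I w) h)
  simp only [sub_self, norm_zero, ← emb_sub] at this
  have := norm_emb h1 h2 (z - w) ▸ this
  have : z - w = 0 := by
    rw [← norm_eq_zero]; linarith [norm_nonneg (z-w), this.symm]
  exact sub_eq_zero.mp this

lemma core_w {I J : ℍ[ℝ]} (hI : I * I = -1) (hJ : J * J = -1) (z : ℂ) :
    (1 - J * I) * emb I z = emb J z * (1 - J * I) := by
  simp only [emb, sub_mul, mul_sub, one_mul, mul_one, add_mul, mul_add,
    mul_smul_comm, smul_mul_assoc, Quaternion.coe_mul_eq_smul, Quaternion.mul_coe_eq_smul,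
    mul_assoc, hI, mul_neg_one]
  rw [show J * (J * I) = -I by rw [← mul_assoc, hJ]; simp]
  simp only [mul_neg, mul_smul_comm, hI, mul_neg_one, neg_neg, smul_neg,
    sub_neg_eq_add, smul_sub, smul_add, mul_one]
  module

lemma core_w' {I J : ℍ[ℝ]} (hI : I * I = -1) (hJ : J * J = -1) (z : ℂ) :
    (1 + J * I) * emb I (starRingEnd ℂ z) = emb J z * (1 + J * I) := by
  simp only [emb, Complex.conj_re, Complex.conj_im, add_mul, mul_add, one_mul, mul_one,
    mul_smul_comm, smul_mul_assoc, Quaternion.coe_mul_eq_smul, Quaternion.mul_coe_eq_smul,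
    neg_smul, mul_assoc, hI, mul_neg_one]
  rw [show J * (J * I) = -I by rw [← mul_assoc, hJ]; simp]
  simp only [mul_neg, mul_smul_comm, hI, mul_neg_one, neg_neg, smul_neg,
    sub_neg_eq_add, smul_sub, smul_add, mul_one]
  module

lemma comm_w {I J : ℍ[ℝ]} (hI : I * I = -1) (hJ : J * J = -1) (z : ℂ) :
    ((2:ℝ)⁻¹ • (1 - J * I)) * emb I z = emb J z * ((2:ℝ)⁻¹ • (1 - J * I)) := by
  rw [smul_mul_assoc, mul_smul_comm, core_w hI hJ]

lemma comm_w' {I J : ℍ[ℝ]} (hI : I * I = -1) (hJ : J * J = -1) (z : ℂ) :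
    ((2:ℝ)⁻¹ • (1 + J * I)) * emb I (starRingEnd ℂ z) = emb J z * ((2:ℝ)⁻¹ • (1 + J * I)) := by
  rw [smul_mul_assoc, mul_smul_comm, core_w' hI hJ]

lemma w_add_w' (I J : ℍ[ℝ]) :
    ((2:ℝ)⁻¹ • (1 - J * I)) + ((2:ℝ)⁻¹ • (1 + J * I)) = 1 := by
  rw [← smul_add, show (1 - J*I) + (1 + J*I) = (2:ℝ) • 1 by module, smul_smul]
  norm_num

lemma decomp {I J : ℍ[ℝ]} (hI : I * I = -1) (hJ : J * J = -1) (z : ℂ) :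
    emb J z = ((2:ℝ)⁻¹ • (1 - J * I)) * emb I z
      + ((2:ℝ)⁻¹ • (1 + J * I)) * emb I (starRingEnd ℂ z) := by
  rw [comm_w hI hJ, comm_w' hI hJ, ← mul_add, w_add_w', mul_one]

lemma norm_w_le {I J : ℍ[ℝ]} (hI2 : ‖I‖ = 1) (hJ2 : ‖J‖ = 1) :
    ‖(2:ℝ)⁻¹ • (1 - J * I)‖ ≤ 1 := by
  rw [norm_smul]
  have h1 : ‖(1:ℍ[ℝ]) - J * I‖ ≤ 2 := by
    calc ‖(1:ℍ[ℝ]) - J * I‖ ≤ ‖(1:ℍ[ℝ])‖ + ‖J * I‖ := norm_sub_le _ _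
    _ = 2 := by rw [norm_one, norm_mul, hI2, hJ2]; norm_num
  have h2 : ‖(2:ℝ)⁻¹‖ = 2⁻¹ := by norm_num
  rw [h2]; linarith

lemma norm_w'_le {I J : ℍ[ℝ]} (hI2 : ‖I‖ = 1) (hJ2 : ‖J‖ = 1) :
    ‖(2:ℝ)⁻¹ • (1 + J * I)‖ ≤ 1 := by
  rw [norm_smul]
  have h1 : ‖(1:ℍ[ℝ]) + J * I‖ ≤ 2 := by
    calc ‖(1:ℍ[ℝ]) + J * I‖ ≤ ‖(1:ℍ[ℝ])‖ + ‖J * I‖ := norm_add_le _ _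
    _ = 2 := by rw [norm_one, norm_mul, hI2, hJ2]; norm_num
  have h2 : ‖(2:ℝ)⁻¹‖ = 2⁻¹ := by norm_num
  rw [h2]; linarith

def embL (I : ℍ[ℝ]) : ℂ →ₗ[ℝ] ℍ[ℝ] where
  toFun := emb I
  map_add' := emb_add I
  map_smul' := emb_smul I

lemma csum (A Z : ℂ) (n : ℕ) :
    ∑ k ∈ Finset.range (n+1), ((n.choose k : ℝ) * (-1:ℝ)^k) • (Z^k * A^(n-k))
      = (A - Z)^n := by
  rw [show A - Z = -Z + A by ring, add_pow]
  apply Finset.sum_congr rfl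
  intro k hk
  rw [Complex.real_smul]
  push_cast
  rw [neg_pow]
  ring

lemma main_aux {I J : ℍ[ℝ]} (hI1 : I.re = 0) (hI2 : ‖I‖ = 1)
    (hJ1 : J.re = 0) (hJ2 : ‖J‖ = 1)
    (P Q : ℂ) (p q : ℍ[ℝ]) (hp : p = emb I P) (hq : q = emb J Q)
    (ha : ‖Q - (P + 1)‖ < 1)
    (hQP' : Q ≠ starRingEnd ℂ P)
    (hb : ‖starRingEnd ℂ Q - (P + 1)‖ < 1 ∨ J = I)
    (T : ℕ → ℍ[ℝ])
    (hT : ∀ n, T n = ∑ k ∈ Finset.range (n + 1),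
      ((n.choose k : ℝ) * (-1 : ℝ) ^ k) • (q ^ k * (1 + p) ^ (n - k))) :
    q ∉ sphereOf p ∧
    q ^ 2 - 2 * (p.re : ℍ[ℝ]) * q + ((‖p‖ ^ 2 : ℝ) : ℍ[ℝ]) ≠ 0 ∧
    Summable (fun n => ‖T n‖) ∧
    HasSum T ((q ^ 2 - 2 * (p.re : ℍ[ℝ]) * q + ((‖p‖ ^ 2 : ℝ) : ℍ[ℝ]))⁻¹ * (q - star p)) := by
  have hI : I * I = -1 := unit_mul_self hI1 hI2
  have hJ : J * J = -1 := unit_mul_self hJ1 hJ2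
  set w : ℍ[ℝ] := (2:ℝ)⁻¹ • (1 - J * I) with hw
  set w' : ℍ[ℝ] := (2:ℝ)⁻¹ • (1 + J * I) with hw'
  -- Q ≠ P
  have hQP : Q ≠ P := by
    intro h
    rw [h] at ha
    simp only [show P - (P + 1) = -1 by ring, norm_neg, norm_one] at ha
    exact lt_irrefl 1 ha
  -- the quadratic polynomial
  set d : ℂ := (Q - P) * (Q - starRingEnd ℂ P) with hd
  have hd0 : d ≠ 0 := mul_ne_zero (sub_ne_zero.2 hQP) (sub_ne_zero.2 hQP')
  have hpre : p.re = P.re := by rw [hp, emb_re hI1]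
  have hpnorm : ‖p‖ = ‖P‖ := by rw [hp, norm_emb hI1 hI2]
  have hcd : Q ^ 2 - ((2 * P.re : ℝ) : ℂ) * Q + ((‖P‖ ^ 2 : ℝ) : ℂ) = d := by
    have h1 : ((2 * P.re : ℝ) : ℂ) = P + starRingEnd ℂ P := by
      rw [Complex.add_conj]
    have h2 : ((‖P‖ ^ 2 : ℝ) : ℂ) = P * starRingEnd ℂ P := by
      rw [Complex.mul_conj, Complex.normSq_eq_norm_sq]
    rw [h1, h2, hd]; ring
  have e2 : emb J (Q ^ 2 - ((2 * P.re : ℝ) : ℂ) * Q + ((‖P‖ ^ 2 : ℝ) : ℂ))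
      = (emb J Q) ^ 2 - 2 * (P.re : ℍ[ℝ]) * (emb J Q) + ((‖P‖ ^ 2 : ℝ) : ℍ[ℝ]) := by
    rw [emb_add, emb_sub, emb_pow hJ, emb_mul hJ, emb_ofReal, emb_ofReal,
      show ((2 * P.re : ℝ) : ℍ[ℝ]) = 2 * (P.re : ℍ[ℝ]) by rw [Quaternion.coe_mul]; congr 1]
  have hD : q ^ 2 - 2 * (p.re : ℍ[ℝ]) * q + ((‖p‖ ^ 2 : ℝ) : ℍ[ℝ]) = emb J d := by
    rw [hq, hpre, hpnorm, ← hcd, e2]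
  have hD0 : q ^ 2 - 2 * (p.re : ℍ[ℝ]) * q + ((‖p‖ ^ 2 : ℝ) : ℍ[ℝ]) ≠ 0 := by
    rw [hD]
    intro h
    apply hd0
    apply emb_injective hJ1 hJ2
    rw [h]; simp [emb]
  -- T n rewritten
  have hone : (1 + p) = emb I (1 + P) := by rw [hp, emb_add, emb_one]
  have hTn : ∀ n, T n = w * emb I (((1 + P) - Q) ^ n)
      + w' * emb I (((1 + P) - starRingEnd ℂ Q) ^ n) := by
    intro n
    rw [hT n]
    have step : ∀ k, q ^ k * (1 + p) ^ (n - k) =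
        w * emb I (Q ^ k * (1 + P) ^ (n - k))
          + w' * emb I ((starRingEnd ℂ Q) ^ k * (1 + P) ^ (n - k)) := by
      intro k
      rw [hq, ← emb_pow hJ, decomp hI hJ (Q ^ k), hone, ← emb_pow hI, add_mul,
        mul_assoc, mul_assoc, ← emb_mul hI, ← emb_mul hI, map_pow]
    simp_rw [step, smul_add, Finset.sum_add_distrib, ← mul_smul_comm, ← Finset.mul_sum]
    have e1 : ∀ (Z : ℂ), ∑ k ∈ Finset.range (n + 1),
        ((n.choose k : ℝ) * (-1:ℝ)^k) • emb I (Z ^ k * (1 + P) ^ (n - k))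
        = emb I (((1 + P) - Z) ^ n) := by
      intro Z
      rw [← csum (1 + P) Z n]
      rw [show ∀ S : Finset ℕ, ∀ f : ℕ → ℂ, emb I (∑ k ∈ S, f k) = ∑ k ∈ S, emb I (f k)
        from fun S f => map_sum (embL I) f S]
      apply Finset.sum_congr rfl
      intro k _
      exact (emb_smul I _ _).symm
    rw [e1 Q, e1 (starRingEnd ℂ Q)]
  -- geometric sums
  have ha' : ‖(1 + P) - Q‖ < 1 := by
    rw [show (1 + P) - Q = -(Q - (P + 1)) by ring, norm_neg]; exact ha
  have hu : HasSum (fun n => ((1 + P) - Q) ^ n) ((Q - P)⁻¹) := by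
    have := hasSum_geometric_of_norm_lt_one ha'
    rwa [show (1 : ℂ) - ((1 + P) - Q) = Q - P by ring] at this
  -- continuous linear maps
  have key : ∀ (a : ℍ[ℝ]) (f : ℕ → ℂ) (z : ℂ), HasSum f z →
      HasSum (fun n => a * emb I (f n)) (a * emb I z) := by
    intro a f z hf
    have := (((LinearMap.mulLeft ℝ a).comp (embL I)).toContinuousLinearMap).hasSum hf
    simp at this; exact this
  have hL1 : HasSum (fun n => w * emb I (((1 + P) - Q) ^ n)) (w * emb I ((Q - P)⁻¹)) :=
    key w _ _ hu
  have hQ'P : starRingEnd ℂ Q ≠ P := by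
    intro h
    apply hQP'
    rw [← h]; simp
  have hL2 : HasSum (fun n => w' * emb I (((1 + P) - starRingEnd ℂ Q) ^ n))
      (w' * emb I ((starRingEnd ℂ Q - P)⁻¹)) := by
    rcases hb with hb | hb
    · have hb' : ‖(1 + P) - starRingEnd ℂ Q‖ < 1 := by
        rw [show (1 + P) - starRingEnd ℂ Q = -(starRingEnd ℂ Q - (P + 1)) by ring, norm_neg]
        exact hb
      have := hasSum_geometric_of_norm_lt_one hb'
      rw [show (1 : ℂ) - ((1 + P) - starRingEnd ℂ Q) = starRingEnd ℂ Q - P by ring] at this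
      exact key w' _ _ this
    · have hw0 : w' = 0 := by
        rw [hw', hb, hI]
        simp
      simp only [hw0, zero_mul]
      exact hasSum_zero
  have hsumT : HasSum T (w * emb I ((Q - P)⁻¹) + w' * emb I ((starRingEnd ℂ Q - P)⁻¹)) := by
    have hfun : T = fun n => w * emb I (((1 + P) - Q) ^ n)
        + w' * emb I (((1 + P) - starRingEnd ℂ Q) ^ n) := funext hTn
    rw [hfun]
    exact hL1.add hL2
  -- final identity
  set u : ℂ := (Q - P)⁻¹
  set v : ℂ := (starRingEnd ℂ Q - P)⁻¹
  set L : ℍ[ℝ] := w * emb I u + w' * emb I v with hL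
  have hdu : d * u = Q - starRingEnd ℂ P := by
    rw [hd, show (Q - P) * (Q - starRingEnd ℂ P) = (Q - starRingEnd ℂ P) * (Q - P) by ring,
      mul_assoc, mul_inv_cancel₀ (sub_ne_zero.2 hQP), mul_one]
  have hdv : starRingEnd ℂ d * v = starRingEnd ℂ Q - starRingEnd ℂ P := by
    have : starRingEnd ℂ d = (starRingEnd ℂ Q - starRingEnd ℂ P) * (starRingEnd ℂ Q - P) := by
      rw [hd, map_mul, map_sub, map_sub]
      simp
    rw [this, mul_assoc, mul_inv_cancel₀ (sub_ne_zero.2 hQ'P), mul_one]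
  have hDL : emb J d * L = q - star p := by
    have c1 : emb J d * (w * emb I u) = w * emb I (d * u) := by
      rw [← mul_assoc, ← comm_w hI hJ, mul_assoc, ← emb_mul hI]
    have c2 : emb J d * (w' * emb I v) = w' * emb I (starRingEnd ℂ d * v) := by
      rw [← mul_assoc, ← comm_w' hI hJ, mul_assoc, ← emb_mul hI]
    rw [hL, mul_add, c1, c2, hdu, hdv, emb_sub, emb_sub, mul_sub, mul_sub]
    have c3 : w * emb I Q + w' * emb I (starRingEnd ℂ Q) = q := by
      rw [hq, decomp hI hJ]
    have c4 : star p = emb I (starRingEnd ℂ P) := by rw [hp, star_emb hI1]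
    rw [c4]
    calc w * emb I Q - w * emb I (starRingEnd ℂ P)
        + (w' * emb I (starRingEnd ℂ Q) - w' * emb I (starRingEnd ℂ P))
        = (w * emb I Q + w' * emb I (starRingEnd ℂ Q))
          - (w + w') * emb I (starRingEnd ℂ P) := by rw [add_mul]; abel
      _ = q - emb I (starRingEnd ℂ P) := by rw [c3, w_add_w', one_mul]
  have hLe : (q ^ 2 - 2 * (p.re : ℍ[ℝ]) * q + ((‖p‖ ^ 2 : ℝ) : ℍ[ℝ]))⁻¹ * (q - star p) = L := by
    rw [hD, ← hDL, inv_mul_cancel_left₀]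
    intro h
    apply hd0
    apply emb_injective hJ1 hJ2
    rw [h]; simp [emb]
  -- summability of norms
  have hsummable : Summable (fun n => ‖T n‖) := by
    have hmaj : ∀ n, ‖T n‖ ≤ ‖w‖ * ‖(1 + P) - Q‖ ^ n
        + ‖w'‖ * ‖(1 + P) - starRingEnd ℂ Q‖ ^ n := by
      intro n
      rw [hTn n]
      calc ‖w * emb I (((1 + P) - Q) ^ n) + w' * emb I (((1 + P) - starRingEnd ℂ Q) ^ n)‖
          ≤ ‖w * emb I (((1 + P) - Q) ^ n)‖ + ‖w' * emb I (((1 + P) - starRingEnd ℂ Q) ^ n)‖ :=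
            norm_add_le _ _
        _ = _ := by
            rw [norm_mul, norm_mul, norm_emb hI1 hI2, norm_emb hI1 hI2, norm_pow, norm_pow]
    apply Summable.of_nonneg_of_le (fun n => norm_nonneg _) hmaj
    apply Summable.add
    · exact (summable_geometric_of_lt_one (norm_nonneg _) ha').mul_left _
    · rcases hb with hb | hb
      · have hb' : ‖(1 + P) - starRingEnd ℂ Q‖ < 1 := by
          rw [show (1 + P) - starRingEnd ℂ Q = -(starRingEnd ℂ Q - (P + 1)) by ring]
          rw [norm_neg]; exact hb
        exact (summable_geometric_of_lt_one (norm_nonneg _) hb').mul_left _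
      · have hw0 : w' = 0 := by rw [hw', hb, hI]; simp
        simp only [hw0, norm_zero, zero_mul]
        exact summable_zero
  -- not in the sphere
  have hsphere : q ∉ sphereOf p := by
    rintro ⟨J₀, hJ₀1, hJ₀2, h3⟩
    have hre : q.re = p.re := by
      rw [h3]
      simp [hJ₀1]
    have him : ‖Quaternion.im q‖ = ‖Quaternion.im p‖ := by
      rw [h3]
      have : Quaternion.im ((p.re : ℍ[ℝ]) + ‖Quaternion.im p‖ • J₀)
          = ‖Quaternion.im p‖ • J₀ := by
        ext <;> simp [QuaternionAlgebra.re_im, QuaternionAlgebra.imI_im, QuaternionAlgebra.imJ_im, QuaternionAlgebra.imK_im, hJ₀1]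
      rw [this, norm_smul, hJ₀2, mul_one]
      simp [abs_of_nonneg (norm_nonneg _)]
    rw [hq, emb_re hJ1, hpre] at hre
    rw [hq, emb_im hJ1, hp, emb_im hI1, norm_smul, norm_smul, hJ2, hI2] at him
    simp only [mul_one, Real.norm_eq_abs] at him
    rcases abs_eq_abs.mp him with h | h
    · exact hQP (Complex.ext hre h)
    · apply hQP'
      apply Complex.ext
      · simpa using hre
      · simpa using h
  exact ⟨hsphere, hD0, hsummable, hLe ▸ hsumT⟩

/-- The `*`-Taylor expansion of the left slice hyperholomorphic Cauchy kernel at `p + 1`: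
the series `∑ (1 − q + p)^{*n}` converges absolutely to `−S_L⁻¹(p,q)` on `P̃(p+1,1)`. -/
theorem star_series_of_cauchy_kernel (I p q : ℍ[ℝ])
    (hI : I.re = 0 ∧ ‖I‖ = 1)
    (hp : ∃ x y : ℝ, p = (x : ℍ[ℝ]) + y • I)
    (hq : (∃ x y : ℝ, q = (x : ℍ[ℝ]) + y • I ∧ ‖q - (p + 1)‖ < 1) ∨
      (∃ (J : ℍ[ℝ]) (x y : ℝ), J.re = 0 ∧ ‖J‖ = 1 ∧ q = (x : ℍ[ℝ]) + y • J ∧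
        ‖(x : ℍ[ℝ]) + y • I - (p + 1)‖ < 1 ∧ ‖(x : ℍ[ℝ]) - y • I - (p + 1)‖ < 1))
    (T : ℕ → ℍ[ℝ])
    (hT : ∀ n, T n = ∑ k ∈ Finset.range (n + 1),
      ((n.choose k : ℝ) * (-1 : ℝ) ^ k) • (q ^ k * (1 + p) ^ (n - k))) :
    q ∉ sphereOf p ∧
    q ^ 2 - 2 * (p.re : ℍ[ℝ]) * q + ((‖p‖ ^ 2 : ℝ) : ℍ[ℝ]) ≠ 0 ∧
    Summable (fun n => ‖T n‖) ∧
    HasSum T ((q ^ 2 - 2 * (p.re : ℍ[ℝ]) * q + ((‖p‖ ^ 2 : ℝ) : ℍ[ℝ]))⁻¹ * (q - star p)) := by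
  obtain ⟨hI1, hI2⟩ := hI
  obtain ⟨x0, y0, hp0⟩ := hp
  set P : ℂ := ⟨x0, y0⟩ with hP
  have hpP : p = emb I P := by rw [hp0]; rfl
  have hplus : emb I (P + 1) = p + 1 := by rw [emb_add, emb_one, hpP]
  rcases hq with ⟨x, y, hq0, hlt⟩ | ⟨J, x, y, hJ1, hJ2, hq0, hlt1, hlt2⟩
  · set Q : ℂ := ⟨x, y⟩ with hQ
    have hqQ : q = emb I Q := by rw [hq0]; rfl
    have ha : ‖Q - (P + 1)‖ < 1 := by
      rw [← norm_emb hI1 hI2, emb_sub, hplus, ← hqQ]; exact hlt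
    have hQP' : Q ≠ starRingEnd ℂ P := by
      intro h
      have h2 : ‖Q - (P + 1)‖ ^ 2 = 1 + 4 * y0 ^ 2 := by
        rw [h, Complex.sq_norm, Complex.normSq_apply]
        simp only [Complex.sub_re, Complex.sub_im, Complex.add_re, Complex.add_im,
          Complex.conj_re, Complex.conj_im, Complex.one_re, Complex.one_im]
        show (P.re - (P.re + 1)) * (P.re - (P.re + 1))
          + (-P.im - (P.im + 0)) * (-P.im - (P.im + 0)) = 1 + 4 * y0 ^ 2
        have : P.im = y0 := rfl
        rw [this]; ring
      nlinarith [ha, norm_nonneg (Q - (P + 1))]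
    exact main_aux hI1 hI2 hI1 hI2 P Q p q hpP hqQ ha hQP' (Or.inr rfl) T hT
  · set Q : ℂ := ⟨x, y⟩ with hQ
    have hqQ : q = emb J Q := by rw [hq0]; rfl
    have hxy : ((x : ℍ[ℝ]) + y • I) = emb I Q := rfl
    have ha : ‖Q - (P + 1)‖ < 1 := by
      rw [← norm_emb hI1 hI2, emb_sub, hplus, ← hxy]; exact hlt1
    have hconj : emb I (starRingEnd ℂ Q) = (x : ℍ[ℝ]) - y • I := by
      show ((starRingEnd ℂ Q).re : ℍ[ℝ]) + (starRingEnd ℂ Q).im • I = _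
      have h1 : (starRingEnd ℂ Q).re = x := rfl
      have h2 : (starRingEnd ℂ Q).im = -y := rfl
      rw [h1, h2, neg_smul, sub_eq_add_neg]
    have hbb : ‖starRingEnd ℂ Q - (P + 1)‖ < 1 := by
      rw [← norm_emb hI1 hI2, emb_sub, hplus, hconj]; exact hlt2
    have hQP' : Q ≠ starRingEnd ℂ P := by
      intro h
      rw [h] at hbb
      simp only [Complex.conj_conj] at hbb
      rw [show P - (P + 1) = -1 by ring, norm_neg, norm_one] at hbb
      exact lt_irrefl 1 hbb
    exact main_aux hI1 hI2 hJ1 hJ2 P Q p q hpP hqQ ha hQP' (Or.inl hbb) T hT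
end
end

section
/- Let I, J ∈ 𝕊, let p ∈ ℂ_I := {x + I·y : x, y ∈ ℝ}, let x₀, y₀ ∈ ℝ and q = x₀ + y₀·J; put w₊ = x₀ + y₀·I and w₋ = x₀ − y₀·I. Then for every n ∈ ℕ: ‖∑_{k=0}^{n} binom(n,k)·(−1)^{n−k}·qᵏ·p^{n−k}‖ ≤ 2·max(‖(w₊ − p)ⁿ‖, ‖(w₋ − p)ⁿ‖) (a bound for the star power (q−p)^{*n}). If moreover q ∉ [p], then w₊ ≠ p, w₋ ≠ p, q² − 2(Re p)·q + |p|² ≠ 0, and the negative star power (q−p)^{−n*} := (q² − 2(Re p)·q + |p|²)^{−n} · ∑_{k=0}^{n} binom(n,k)·(−1)^{n−k}·qᵏ·p̄^{n−k} satisfies ‖(q−p)^{−n*}‖ ≤ 2 / min(‖(w₊ − p)ⁿ‖, ‖(w₋ − p)ⁿ‖). -/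
noncomputable section
open Quaternion

namespace SPAux

def lift (K : ℍ[ℝ]) (z : ℂ) : ℍ[ℝ] := (z.re : ℍ[ℝ]) + z.im • K

lemma coe_eq_smul_one (r : ℝ) : (r : ℍ[ℝ]) = r • (1 : ℍ[ℝ]) := by
  rw [← Quaternion.coe_mul_eq_smul]; simp

lemma K_mul_K {K : ℍ[ℝ]} (hre : K.re = 0) (hn : ‖K‖ = 1) : K * K = -1 := by
  have hs : star K = -K := Quaternion.star_eq_neg.mpr hre
  have h1 : K * star K = ((Quaternion.normSq K : ℝ) : ℍ[ℝ]) := Quaternion.self_mul_star K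
  have h2 : (Quaternion.normSq K : ℝ) = 1 := by
    rw [Quaternion.normSq_eq_norm_mul_self, hn]; ring
  rw [hs, mul_neg, h2] at h1
  have h3 : -(K * K) = 1 := by simpa using h1
  exact neg_eq_iff_eq_neg.mp (by simpa using h3)

lemma lift_smul (K : ℍ[ℝ]) (r : ℝ) (z : ℂ) : lift K (r • z) = r • lift K z := by
  simp [lift, smul_add, smul_smul, coe_eq_smul_one]
  ring

lemma lift_one (K : ℍ[ℝ]) : lift K 1 = 1 := by simp [lift]

lemma lift_add (K : ℍ[ℝ]) (z w : ℂ) : lift K (z + w) = lift K z + lift K w := by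
  simp only [lift, Complex.add_re, Complex.add_im, coe_eq_smul_one, add_smul]
  module

lemma lift_sub (K : ℍ[ℝ]) (z w : ℂ) : lift K (z - w) = lift K z - lift K w := by
  simp only [lift, Complex.sub_re, Complex.sub_im, coe_eq_smul_one, sub_smul]
  module

lemma lift_mul {K : ℍ[ℝ]} (h : K * K = -1) (z w : ℂ) :
    lift K (z * w) = lift K z * lift K w := by
  simp only [lift, Complex.mul_re, Complex.mul_im, add_mul, mul_add, smul_mul_assoc,
    mul_smul_comm, smul_smul, h, Quaternion.coe_mul_eq_smul, Quaternion.mul_coe_eq_smul,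
    Quaternion.coe_sub, Quaternion.coe_mul, smul_neg, coe_eq_smul_one, mul_one, one_mul]
  module

lemma lift_pow {K : ℍ[ℝ]} (h : K * K = -1) (z : ℂ) (n : ℕ) :
    lift K (z ^ n) = lift K z ^ n := by
  induction n with
  | zero => simp [lift_one]
  | succ n ih => rw [pow_succ, pow_succ, lift_mul h, ih]

lemma lift_coe (K : ℍ[ℝ]) (r : ℝ) : lift K ((r : ℂ)) = (r : ℍ[ℝ]) := by
  simp [lift]

lemma lift_norm {K : ℍ[ℝ]} (hre : K.re = 0) (hn : ‖K‖ = 1) (z : ℂ) :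
    ‖lift K z‖ = ‖z‖ := by
  have h1 : ‖lift K z‖ * ‖lift K z‖ = Quaternion.normSq (lift K z) :=
    (Quaternion.normSq_eq_norm_mul_self _).symm
  have hK : K.imI^2 + K.imJ^2 + K.imK^2 = 1 := by
    have : (Quaternion.normSq K : ℝ) = 1 := by
      rw [Quaternion.normSq_eq_norm_mul_self, hn]; ring
    rw [Quaternion.normSq_def'] at this
    nlinarith [this]
  have h2 : (Quaternion.normSq (lift K z) : ℝ) = ‖z‖ * ‖z‖ := by
    rw [Quaternion.normSq_def']
    simp [lift, hre]
    rw [Complex.norm_mul_self_eq_normSq, Complex.normSq_apply]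
    nlinarith [hK]
  rw [h2] at h1
  nlinarith [norm_nonneg (lift K z), norm_nonneg z, h1]

lemma lift_sum (K : ℍ[ℝ]) {A : Type*} (s : Finset A) (f : A → ℂ) :
    lift K (∑ a ∈ s, f a) = ∑ a ∈ s, lift K (f a) :=
  map_sum (AddMonoidHom.mk' (lift K) (lift_add K)) f s

lemma lift_decomp {I J : ℍ[ℝ]} (hI2 : I * I = -1) (c : ℂ) :
    lift J c = (2:ℝ)⁻¹ • (lift I c + lift I ((starRingEnd ℂ) c))
      + (2:ℝ)⁻¹ • ((J * I) * (lift I ((starRingEnd ℂ) c) - lift I c)) := by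
  have h1 : lift I ((starRingEnd ℂ) c) - lift I c = (-(2*c.im)) • I := by
    simp only [lift, Complex.conj_re, Complex.conj_im, coe_eq_smul_one, neg_smul]
    module
  rw [h1, mul_smul_comm, mul_assoc, hI2, mul_neg_one]
  simp only [lift, Complex.conj_re, Complex.conj_im, coe_eq_smul_one, neg_smul, smul_neg, neg_neg, smul_smul]
  module

lemma sum_lift {I : ℍ[ℝ]} (hI2 : I * I = -1) (β w : ℂ) (n : ℕ) :
    ∑ k ∈ Finset.range (n+1),
        ((n.choose k : ℝ) * (-1:ℝ)^(n-k)) • (lift I (w^k) * lift I (β^(n-k)))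
      = lift I ((w - β)^n) := by
  rw [sub_pow, lift_sum]
  apply Finset.sum_congr rfl
  intro m hm
  have hm' : m ≤ n := Nat.lt_succ_iff.mp (Finset.mem_range.mp hm)
  have hpar : ((-1:ℂ))^(m+n) = ((-1:ℂ))^(n-m) := by
    rw [show m + n = (n - m) + 2*m by omega, pow_add, pow_mul]; simp
  have key : (-1:ℂ)^(m+n) * w^m * β^(n-m) * (n.choose m : ℂ)
       = ((n.choose m : ℝ) * (-1:ℝ)^(n-m)) • (w^m * β^(n-m)) := by
    rw [hpar, Complex.real_smul]
    push_cast
    ring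
  rw [key, lift_smul, lift_mul hI2, lift_pow hI2, lift_pow hI2]

lemma sum_decomp {I J : ℍ[ℝ]} (hI2 : I * I = -1) (z β : ℂ) (n : ℕ) :
    ∑ k ∈ Finset.range (n+1),
        ((n.choose k : ℝ) * (-1:ℝ)^(n-k)) • (lift J (z^k) * lift I (β^(n-k)))
      = (2:ℝ)⁻¹ • (lift I ((z-β)^n) + lift I (((starRingEnd ℂ) z - β)^n))
        + (2:ℝ)⁻¹ • ((J * I) *
            (lift I (((starRingEnd ℂ) z - β)^n) - lift I ((z-β)^n))) := by
  have decomp_mul : ∀ (c : ℝ) (A B C JI : ℍ[ℝ]),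
      c • (((2:ℝ)⁻¹ • (A + B) + (2:ℝ)⁻¹ • (JI * (B - A))) * C)
      = (2:ℝ)⁻¹ • (c • (A * C) + c • (B * C))
        + (2:ℝ)⁻¹ • (JI * (c • (B * C) - c • (A * C))) := by
    intro c A B C JI
    simp only [add_mul, sub_mul, smul_mul_assoc, mul_assoc, mul_sub, mul_add,
      mul_smul_comm, smul_add, smul_sub, smul_smul]
    module
  have expand : ∀ k ∈ Finset.range (n+1),
      ((n.choose k : ℝ) * (-1:ℝ)^(n-k)) • (lift J (z^k) * lift I (β^(n-k)))
      = ((2:ℝ)⁻¹ • (((n.choose k : ℝ) * (-1:ℝ)^(n-k)) • (lift I (z^k) * lift I (β^(n-k)))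
               + ((n.choose k : ℝ) * (-1:ℝ)^(n-k)) • (lift I (((starRingEnd ℂ) z)^k) * lift I (β^(n-k))))
        + (2:ℝ)⁻¹ • ((J * I) *
            (((n.choose k : ℝ) * (-1:ℝ)^(n-k)) • (lift I (((starRingEnd ℂ) z)^k) * lift I (β^(n-k)))
             - ((n.choose k : ℝ) * (-1:ℝ)^(n-k)) • (lift I (z^k) * lift I (β^(n-k)))))) := by
    intro k _
    rw [lift_decomp hI2 (z^k), ← map_pow, decomp_mul]
  rw [Finset.sum_congr rfl expand, Finset.sum_add_distrib, ← Finset.smul_sum, ← Finset.smul_sum,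
    Finset.sum_add_distrib, ← Finset.mul_sum, Finset.sum_sub_distrib,
    sum_lift hI2 β z n, sum_lift hI2 β ((starRingEnd ℂ) z) n]

lemma norm_decomp_le {JI x y : ℍ[ℝ]} (hJI : ‖JI‖ ≤ 1) :
    ‖(2:ℝ)⁻¹ • (x + y) + (2:ℝ)⁻¹ • (JI * (y - x))‖ ≤ ‖x‖ + ‖y‖ := by
  have h1 := norm_add_le ((2:ℝ)⁻¹ • (x + y)) ((2:ℝ)⁻¹ • (JI * (y - x)))
  rw [norm_smul, norm_smul, norm_mul] at h1
  have h2 := norm_add_le x y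
  have h3 := norm_sub_le y x
  have h4 : ‖JI * (y-x)‖ = ‖JI‖ * ‖y-x‖ := norm_mul _ _
  have h5 : (0:ℝ) ≤ ‖y - x‖ := norm_nonneg _
  simp only [norm_inv, Real.norm_ofNat] at h1
  nlinarith [norm_nonneg (x+y), norm_nonneg JI]

end SPAux

open SPAux


/-- Bounds on the positive and negative star powers `(q−p)^{*n}` and `(q−p)^{−n*}`. -/
theorem star_power_norm_bounds (I J : ℍ[ℝ])
    (hI : I.re = 0 ∧ ‖I‖ = 1) (hJ : J.re = 0 ∧ ‖J‖ = 1)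
    (p : ℍ[ℝ]) (hp : ∃ a b : ℝ, p = (a : ℍ[ℝ]) + b • I)
    (x₀ y₀ : ℝ) (q : ℍ[ℝ]) (hqdef : q = (x₀ : ℍ[ℝ]) + y₀ • J)
    (wp wm : ℍ[ℝ]) (hwp : wp = (x₀ : ℍ[ℝ]) + y₀ • I) (hwm : wm = (x₀ : ℍ[ℝ]) - y₀ • I) :
    (∀ n : ℕ,
      ‖∑ k ∈ Finset.range (n + 1), ((n.choose k : ℝ) * (-1 : ℝ) ^ (n - k)) • (q ^ k * p ^ (n - k))‖ ≤
        2 * max ‖(wp - p) ^ n‖ ‖(wm - p) ^ n‖) ∧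
    (q ∉ sphereOf p →
      wp ≠ p ∧ wm ≠ p ∧
      q ^ 2 - 2 * (p.re : ℍ[ℝ]) * q + ((‖p‖ ^ 2 : ℝ) : ℍ[ℝ]) ≠ 0 ∧
      ∀ n : ℕ,
        ‖((q ^ 2 - 2 * (p.re : ℍ[ℝ]) * q + ((‖p‖ ^ 2 : ℝ) : ℍ[ℝ])) ^ n)⁻¹ *
            ∑ k ∈ Finset.range (n + 1),
              ((n.choose k : ℝ) * (-1 : ℝ) ^ (n - k)) • (q ^ k * (star p) ^ (n - k))‖ ≤
          2 / min ‖(wp - p) ^ n‖ ‖(wm - p) ^ n‖) := by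
  obtain ⟨hIre, hIn⟩ := hI
  obtain ⟨hJre, hJn⟩ := hJ
  obtain ⟨a, b, hpdef⟩ := hp
  have hI2 : I * I = -1 := K_mul_K hIre hIn
  have hJ2 : J * J = -1 := K_mul_K hJre hJn
  set z : ℂ := ⟨x₀, y₀⟩ with hz
  set α : ℂ := ⟨a, b⟩ with hα
  have hq : q = lift J z := by rw [hqdef]; rfl
  have hp' : p = lift I α := by rw [hpdef]; rfl
  have hwp' : wp = lift I z := by rw [hwp]; rfl
  have hwm' : wm = lift I ((starRingEnd ℂ) z) := by
    rw [hwm, lift]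
    simp only [Complex.conj_re, Complex.conj_im]
    rw [sub_eq_add_neg, ← neg_smul]
  have hJI : ‖J * I‖ ≤ 1 := by rw [norm_mul, hJn, hIn]; norm_num
  have hwp_sub : ∀ n : ℕ, ‖(wp - p) ^ n‖ = ‖z - α‖ ^ n := by
    intro n
    rw [hwp', hp', ← lift_sub, norm_pow, lift_norm hIre hIn]
  have hwm_sub : ∀ n : ℕ, ‖(wm - p) ^ n‖ = ‖(starRingEnd ℂ) z - α‖ ^ n := by
    intro n
    rw [hwm', hp', ← lift_sub, norm_pow, lift_norm hIre hIn]
  constructor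
  · -- Part 1
    intro n
    have hsum : ∑ k ∈ Finset.range (n + 1),
        ((n.choose k : ℝ) * (-1 : ℝ) ^ (n - k)) • (q ^ k * p ^ (n - k))
        = (2:ℝ)⁻¹ • (lift I ((z-α)^n) + lift I (((starRingEnd ℂ) z - α)^n))
          + (2:ℝ)⁻¹ • ((J * I) *
              (lift I (((starRingEnd ℂ) z - α)^n) - lift I ((z-α)^n))) := by
      rw [← sum_decomp hI2 z α n]
      apply Finset.sum_congr rfl
      intro k _
      rw [hq, hp', lift_pow hJ2, lift_pow hI2]
    rw [hsum]
    have h1 := norm_decomp_le (x := lift I ((z-α)^n)) (y := lift I (((starRingEnd ℂ) z - α)^n)) hJI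
    have h2 : ‖lift I ((z-α)^n)‖ = ‖(wp - p)^n‖ := by
      rw [lift_norm hIre hIn, norm_pow, hwp_sub n]
    have h3 : ‖lift I (((starRingEnd ℂ) z - α)^n)‖ = ‖(wm - p)^n‖ := by
      rw [lift_norm hIre hIn, norm_pow, hwm_sub n]
    rw [h2, h3] at h1
    have h4 : ‖(wp - p)^n‖ ≤ max ‖(wp - p) ^ n‖ ‖(wm - p) ^ n‖ := le_max_left _ _
    have h5 : ‖(wm - p)^n‖ ≤ max ‖(wp - p) ^ n‖ ‖(wm - p) ^ n‖ := le_max_right _ _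
    linarith
  · -- Part 2
    intro hnotin
    have hpre : p.re = a := by rw [hpdef]; simp [hIre]
    have him : Quaternion.im p = b • I := by
      rw [hpdef]; ext <;> simp [hIre]
    have hnim : ‖Quaternion.im p‖ = |b| := by
      rw [him, norm_smul, hIn, Real.norm_eq_abs, mul_one]
    have hmem : x₀ = a → |y₀| = |b| → q ∈ sphereOf p := by
      intro hx hy
      refine ⟨if 0 ≤ y₀ then J else -J, ?_, ?_, ?_⟩
      · split <;> simp [hJre]
      · split <;> simp [hJn]
      · rw [hqdef, hpre, hx, hnim, ← hy]
        congr 1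
        split
        next h => rw [abs_of_nonneg h]
        next h =>
          rw [abs_of_neg (lt_of_not_ge h), smul_neg, ← neg_smul, neg_neg]
    have hinj : ∀ u v : ℂ, lift I u = lift I v → u = v := by
      intro u v h
      have h0 : ‖lift I (u - v)‖ = 0 := by rw [lift_sub, h, sub_self, norm_zero]
      rw [lift_norm hIre hIn] at h0
      have := norm_eq_zero.mp h0
      exact sub_eq_zero.mp this
    have hwpne : wp ≠ p := by
      intro h
      apply hnotin
      have hzα : z = α := hinj _ _ (by rw [← hwp', ← hp', h])
      have hx : x₀ = a := congrArg Complex.re hzα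
      have hy : y₀ = b := congrArg Complex.im hzα
      exact hmem hx (by rw [hy])
    have hwmne : wm ≠ p := by
      intro h
      apply hnotin
      have hzα : (starRingEnd ℂ) z = α := hinj _ _ (by rw [← hwm', ← hp', h])
      have hx : x₀ = a := congrArg Complex.re hzα
      have hy : -y₀ = b := congrArg Complex.im hzα
      exact hmem hx (by rw [← hy, abs_neg])
    have hzne : z ≠ α := fun h => hwpne (by rw [hwp', hp', h])
    have hz2ne : z ≠ (starRingEnd ℂ) α := by
      intro h
      apply hwmne
      rw [hwm', hp', h, Complex.conj_conj]
    set r : ℝ := ‖z - α‖ with hr_def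
    set s : ℝ := ‖(starRingEnd ℂ) z - α‖ with hs_def
    have hr : 0 < r := by
      rw [hr_def]
      exact norm_pos_iff.mpr (sub_ne_zero.mpr hzne)
    have hs : 0 < s := by
      rw [hs_def]
      refine norm_pos_iff.mpr (sub_ne_zero.mpr ?_)
      intro h
      exact hz2ne (by rw [← Complex.conj_conj z, h])
    have habs2 : ‖z - (starRingEnd ℂ) α‖ = s := by
      rw [← Complex.norm_conj, map_sub, Complex.conj_conj]
    have habs3 : ‖(starRingEnd ℂ) z - (starRingEnd ℂ) α‖ = r := by
      rw [← map_sub, Complex.norm_conj]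
    have hDc : (z - α) * (z - (starRingEnd ℂ) α)
        = z*z - ((2*α.re : ℝ):ℂ) * z + ((Complex.normSq α : ℝ):ℂ) := by
      have h1 := Complex.add_conj α
      have h2 := Complex.mul_conj α
      push_cast
      push_cast at h1 h2
      linear_combination (-z) * h1 + h2
    have hnp : (‖p‖^2 : ℝ) = Complex.normSq α := by
      rw [hp', lift_norm hIre hIn, Complex.sq_norm]
    have hDq : q ^ 2 - 2 * (p.re : ℍ[ℝ]) * q + ((‖p‖ ^ 2 : ℝ) : ℍ[ℝ])
        = lift J ((z - α) * (z - (starRingEnd ℂ) α)) := by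
      rw [hDc, lift_add, lift_sub, lift_mul hJ2, lift_mul hJ2, lift_coe, lift_coe, ← hq]
      rw [hpre, hnp]
      have hαre : α.re = a := rfl
      rw [hαre, pow_two, Quaternion.coe_mul]
      have h2 : ((2:ℝ):ℍ[ℝ]) = (2:ℍ[ℝ]) := by
        rw [show (2:ℝ) = 1 + 1 by norm_num, Quaternion.coe_add, Quaternion.coe_one]
        norm_num
      rw [h2]
    have hDne : q ^ 2 - 2 * (p.re : ℍ[ℝ]) * q + ((‖p‖ ^ 2 : ℝ) : ℍ[ℝ]) ≠ 0 := by
      rw [hDq]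
      intro h
      have h0 : ‖lift J ((z - α) * (z - (starRingEnd ℂ) α))‖ = 0 := by rw [h, norm_zero]
      rw [lift_norm hJre hJn, norm_mul, habs2] at h0
      nlinarith
    refine ⟨hwpne, hwmne, hDne, ?_⟩
    intro n
    have hstarp : star p = lift I ((starRingEnd ℂ) α) := by
      rw [hpdef, lift]
      simp only [Complex.conj_re, Complex.conj_im]
      rw [star_add]
      have h1 : star ((b : ℝ) • I) = (-b) • I := by
        rw [Quaternion.star_smul, Quaternion.star_eq_neg.mpr hIre, smul_neg, neg_smul]
      rw [h1, Quaternion.star_coe]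
    have hNsum : ∑ k ∈ Finset.range (n + 1),
        ((n.choose k : ℝ) * (-1 : ℝ) ^ (n - k)) • (q ^ k * (star p) ^ (n - k))
        = (2:ℝ)⁻¹ • (lift I ((z - (starRingEnd ℂ) α)^n)
            + lift I (((starRingEnd ℂ) z - (starRingEnd ℂ) α)^n))
          + (2:ℝ)⁻¹ • ((J * I) *
              (lift I (((starRingEnd ℂ) z - (starRingEnd ℂ) α)^n)
                - lift I ((z - (starRingEnd ℂ) α)^n))) := by
      rw [← sum_decomp hI2 z ((starRingEnd ℂ) α) n]
      apply Finset.sum_congr rfl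
      intro k _
      rw [hq, hstarp, lift_pow hJ2, lift_pow hI2]
    have hNle : ‖∑ k ∈ Finset.range (n + 1),
        ((n.choose k : ℝ) * (-1 : ℝ) ^ (n - k)) • (q ^ k * (star p) ^ (n - k))‖
        ≤ s ^ n + r ^ n := by
      rw [hNsum]
      have h1 := norm_decomp_le (x := lift I ((z - (starRingEnd ℂ) α)^n))
        (y := lift I (((starRingEnd ℂ) z - (starRingEnd ℂ) α)^n)) hJI
      rw [lift_norm hIre hIn, lift_norm hIre hIn, norm_pow, norm_pow, habs2, habs3] at h1
      exact h1
    have hDpow : ‖(q ^ 2 - 2 * (p.re : ℍ[ℝ]) * q + ((‖p‖ ^ 2 : ℝ) : ℍ[ℝ])) ^ n‖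
        = (r * s) ^ n := by
      rw [hDq, norm_pow, lift_norm hJre hJn, norm_mul, habs2]
    rw [norm_mul, norm_inv, hDpow, hwp_sub n, hwm_sub n]
    have hrn : (0:ℝ) < r ^ n := pow_pos hr n
    have hsn : (0:ℝ) < s ^ n := pow_pos hs n
    have hmin : (0:ℝ) < min (r ^ n) (s ^ n) := lt_min hrn hsn
    calc ((r*s)^n)⁻¹ * ‖∑ k ∈ Finset.range (n + 1),
          ((n.choose k : ℝ) * (-1 : ℝ) ^ (n - k)) • (q ^ k * (star p) ^ (n - k))‖
        ≤ ((r*s)^n)⁻¹ * (s^n + r^n) := by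
          apply mul_le_mul_of_nonneg_left hNle
          positivity
      _ = 1/(r^n) + 1/(s^n) := by
          rw [mul_pow]
          field_simp
      _ ≤ 1/(min (r^n) (s^n)) + 1/(min (r^n) (s^n)) := by
          gcongr
          · exact min_le_left _ _
          · exact min_le_right _ _
      _ = 2/(min (r^n) (s^n)) := by ring
end
end

section
/- Let p, q ∈ ℍ with q ∉ [p] and let n ≥ 1. Define g : ℝ → ℍ on a neighbourhood of 0 by g(t) = (p − conj(q + t))·(p² − 2·Re(q + t)·p + |q + t|²)⁻¹, i.e. g(t) = S_L⁻¹(p, q + t) is the left slice hyperholomorphic Cauchy kernel evaluated at the real translate q + t of q. Then g is (n−1) times differentiable at 0 and g^{(n−1)}(0) = (−1)ⁿ·(n−1)!·(q² − 2(Re p)·q + |p|²)^{−n} · ∑_{k=0}^{n} binom(n,k)·(−1)^{n−k}·qᵏ·p̄^{n−k}; equivalently, the negative star power (q−p)^{−n*} := (q² − 2(Re p)·q + |p|²)^{−n}·∑_{k=0}^{n} binom(n,k)·(−1)^{n−k}·qᵏ·p̄^{n−k} equals ((−1)ⁿ/(n−1)!)·∂_{q₀}^{n−1}S_L⁻¹(p,q),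 where ∂_{q₀} denotes differentiation of q ↦ S_L⁻¹(p,q) in the real direction 1. -/
noncomputable section
open Quaternion

open Finset

@[simp] lemma q_two_re : (2 : ℍ[ℝ]).re = 2 := by
  rw [show (2:ℍ[ℝ]) = ((2:ℕ):ℍ[ℝ]) by norm_cast, Quaternion.re_natCast]; norm_num
@[simp] lemma q_two_imI : (2 : ℍ[ℝ]).imI = 0 := by
  rw [show (2:ℍ[ℝ]) = ((2:ℕ):ℍ[ℝ]) by norm_cast, Quaternion.imI_natCast]
@[simp] lemma q_two_imJ : (2 : ℍ[ℝ]).imJ = 0 := by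
  rw [show (2:ℍ[ℝ]) = ((2:ℕ):ℍ[ℝ]) by norm_cast, Quaternion.imJ_natCast]
@[simp] lemma q_two_imK : (2 : ℍ[ℝ]).imK = 0 := by
  rw [show (2:ℍ[ℝ]) = ((2:ℕ):ℍ[ℝ]) by norm_cast, Quaternion.imK_natCast]

lemma norm_sq_eq (x : ℍ[ℝ]) : (‖x‖ ^ 2 : ℝ) = normSq x := by
  rw [pow_two, Quaternion.normSq_eq_norm_mul_self]


/-- `Bq c x` is the characteristic polynomial of `c` evaluated at `x`. -/
def Bq (c x : ℍ[ℝ]) : ℍ[ℝ] :=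
  x ^ 2 - 2 * ((c.re : ℝ) : ℍ[ℝ]) * x + ((‖c‖ ^ 2 : ℝ) : ℍ[ℝ])

lemma kernel_ring (p s : ℍ[ℝ]) :
    Bq p s * (p - star s) + (s - star p) * Bq s p = 0 := by
  simp only [Bq, norm_sq_eq]
  ext <;> simp [pow_two, Quaternion.normSq_def'] <;> ring

lemma norm_eq_of_sq (x y : ℍ[ℝ]) (h : ‖x‖^2 = ‖y‖^2) : ‖x‖ = ‖y‖ :=
  (sq_eq_sq₀ (norm_nonneg x) (norm_nonneg y)).mp h

lemma Bq_eq_zero_iff (p x : ℍ[ℝ]) : Bq p x = 0 ↔ x.re = p.re ∧ ‖x‖ = ‖p‖ := by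
  have hns : ∀ y z : ℍ[ℝ], normSq y = normSq z → ‖y‖ = ‖z‖ := by
    intro y z h
    exact norm_eq_of_sq y z (by rw [norm_sq_eq, norm_sq_eq, h])
  constructor
  · intro h
    have h0 := congrArg QuaternionAlgebra.re h
    have h1 := congrArg QuaternionAlgebra.imI h
    have h2 := congrArg QuaternionAlgebra.imJ h
    have h3 := congrArg QuaternionAlgebra.imK h
    simp only [Bq, norm_sq_eq] at h0 h1 h2 h3
    simp [pow_two, Quaternion.normSq_def'] at h0 h1 h2 h3
    have hI : (x.re - p.re) * x.imI = 0 := by linear_combination h1 / 2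
    have hJ : (x.re - p.re) * x.imJ = 0 := by linear_combination h2 / 2
    have hK : (x.re - p.re) * x.imK = 0 := by linear_combination h3 / 2
    by_cases hre : x.re = p.re
    · refine ⟨hre, hns x p ?_⟩
      rw [Quaternion.normSq_def', Quaternion.normSq_def']
      linear_combination -h0 + 2*x.re*hre
    · exfalso
      have hd : x.re - p.re ≠ 0 := sub_ne_zero.mpr hre
      have hI' : x.imI = 0 := by rcases mul_eq_zero.mp hI with h' | h'; exact absurd h' hd; exact h'
      have hJ' : x.imJ = 0 := by rcases mul_eq_zero.mp hJ with h' | h'; exact absurd h' hd; exact h'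
      have hK' : x.imK = 0 := by rcases mul_eq_zero.mp hK with h' | h'; exact absurd h' hd; exact h'
      apply hd
      have h5 : (x.re - p.re)^2 = 0 := by
        nlinarith [h0, sq_nonneg p.imI, sq_nonneg p.imJ, sq_nonneg p.imK, sq_nonneg (x.re - p.re)]
      exact pow_eq_zero_iff two_ne_zero |>.mp h5
  · rintro ⟨h1, h2⟩
    have h3 : normSq x = normSq p := by
      rw [← norm_sq_eq, ← norm_sq_eq, h2]
    rw [Quaternion.normSq_def', Quaternion.normSq_def'] at h3
    simp only [Bq, norm_sq_eq]
    ext <;> simp [pow_two, Quaternion.normSq_def']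
    · linear_combination -h3 + 2*x.re*h1
    · linear_combination 2*x.imI*h1
    · linear_combination 2*x.imJ*h1
    · linear_combination 2*x.imK*h1

lemma norm_im_eq (p q : ℍ[ℝ]) (h1 : q.re = p.re) (h2 : ‖q‖ = ‖p‖) :
    ‖Quaternion.im q‖ = ‖Quaternion.im p‖ := by
  apply norm_eq_of_sq
  have h3 : ‖q‖^2 = ‖p‖^2 := by rw [h2]
  rw [norm_sq_eq, norm_sq_eq, Quaternion.normSq_def', Quaternion.normSq_def'] at h3 ⊢
  simp only [Quaternion.re_im, Quaternion.imI_im, Quaternion.imJ_im, Quaternion.imK_im] at *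
  linear_combination h3 - (q.re + p.re) * h1

lemma mem_sphere_of_Bq (p q : ℍ[ℝ]) (h : Bq p q = 0) : q ∈ sphereOf p := by
  obtain ⟨h1, h2⟩ := (Bq_eq_zero_iff p q).mp h
  have him : ‖Quaternion.im q‖ = ‖Quaternion.im p‖ := norm_im_eq p q h1 h2
  by_cases hz : Quaternion.im q = 0
  · obtain ⟨J, hJre, hJI, hJJ, hJK⟩ :
        ∃ J : ℍ[ℝ], J.re = 0 ∧ J.imI = 1 ∧ J.imJ = 0 ∧ J.imK = 0 :=
      ⟨⟨0,1,0,0⟩, rfl, rfl, rfl, rfl⟩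
    refine ⟨J, hJre, ?_, ?_⟩
    · have h4 : ‖J‖^2 = ‖(1 : ℍ[ℝ])‖^2 := by
        rw [norm_sq_eq, norm_sq_eq]
        norm_num [Quaternion.normSq_def', hJre, hJI, hJJ, hJK]
      rw [norm_eq_of_sq _ _ h4, norm_one]
    · have hp : ‖Quaternion.im p‖ = 0 := by rw [← him, hz, norm_zero]
      rw [hp, zero_smul, add_zero, ← h1]
      conv_lhs => rw [← Quaternion.re_add_im q, hz, add_zero]
  · refine ⟨‖Quaternion.im q‖⁻¹ • Quaternion.im q, ?_, ?_, ?_⟩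
    · simp
    · rw [norm_smul, norm_inv, norm_norm, inv_mul_cancel₀ (norm_ne_zero_iff.mpr hz)]
    · rw [smul_smul, ← him, mul_inv_cancel₀ (norm_ne_zero_iff.mpr hz), one_smul,
        ← h1, Quaternion.re_add_im]

lemma Bq_swap_ne (p s : ℍ[ℝ]) (h : Bq p s ≠ 0) : Bq s p ≠ 0 := by
  intro h2
  obtain ⟨h3, h4⟩ := (Bq_eq_zero_iff s p).mp h2
  exact h ((Bq_eq_zero_iff p s).mpr ⟨h3.symm, h4.symm⟩)

lemma kernel_identity (p s : ℍ[ℝ]) (h : Bq p s ≠ 0) :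
    (p - star s) * (Bq s p)⁻¹ = -((Bq p s)⁻¹ * (s - star p)) := by
  have h2 : Bq s p ≠ 0 := Bq_swap_ne p s h
  have e : Bq p s * (p - star s) = -((s - star p) * Bq s p) :=
    add_eq_zero_iff_eq_neg.mp (kernel_ring p s)
  have e2 : (p - star s) = (Bq p s)⁻¹ * -((s - star p) * Bq s p) := by
    rw [← e, inv_mul_cancel_left₀ h]
  rw [e2, mul_neg, neg_mul, mul_assoc, mul_assoc, mul_inv_cancel₀ h2, mul_one]

lemma charPoly_star (p : ℍ[ℝ]) :
    (star p)^2 - 2*((p.re : ℝ):ℍ[ℝ])*(star p) + ((‖p‖^2 : ℝ):ℍ[ℝ]) = 0 := by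
  rw [norm_sq_eq]
  ext <;> simp [pow_two, Quaternion.normSq_def'] <;> ring

/-- iterated star-translate: `Pst p n s = Σ C(n,k)(-1)^{n-k} s^k (star p)^{n-k}` -/
def Pst (p : ℍ[ℝ]) : ℕ → ℍ[ℝ] → ℍ[ℝ]
  | 0, _ => 1
  | n+1, s => s * Pst p n s - Pst p n s * star p

lemma Pst_key (p s : ℍ[ℝ]) (n : ℕ) :
    (2*s - 2*((p.re : ℝ):ℍ[ℝ])) * Pst p (n+1) s - Bq p s * Pst p n s = Pst p (n+2) s := by
  have aux : ∀ u : ℍ[ℝ],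
      (2*s - 2*((p.re : ℝ):ℍ[ℝ])) * (s*u - u*star p) - Bq p s * u
        - (s*(s*u - u*star p) - (s*u - u*star p)*star p)
      = -(u * ((star p)^2 - 2*((p.re : ℝ):ℍ[ℝ])*(star p) + ((‖p‖^2 : ℝ):ℍ[ℝ]))) := by
    intro u
    simp only [Bq, norm_sq_eq]
    ext <;> simp [pow_two, Quaternion.normSq_def'] <;> ring
  have h0 := aux (Pst p n s)
  rw [charPoly_star, mul_zero, neg_zero, sub_eq_zero] at h0
  exact h0

lemma commB (p s : ℍ[ℝ]) : Commute (Bq p s) (2*s - 2*((p.re : ℝ):ℍ[ℝ])) := by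
  show _ * _ = _ * _
  simp only [Bq, norm_sq_eq]
  ext <;> simp [pow_two, Quaternion.normSq_def'] <;> ring

lemma Pst_eq_sum (p : ℍ[ℝ]) (n : ℕ) (s : ℍ[ℝ]) :
    Pst p n s = ∑ k ∈ Finset.range (n+1),
      ((n.choose k : ℝ) * (-1:ℝ)^(n-k)) • (s^k * (star p)^(n-k)) := by
  induction n with
  | zero => simp [Pst]
  | succ n ih =>
    show s * Pst p n s - Pst p n s * star p = _
    rw [ih, Finset.mul_sum, Finset.sum_mul]
    rw [Finset.sum_range_succ' (fun k => (((n+1).choose k : ℝ) * (-1:ℝ)^(n+1-k)) • (s^k * (star p)^(n+1-k)))]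
    have e1 : ∀ i ∈ Finset.range (n+1),
        ((((n+1).choose (i+1) : ℝ)) * (-1:ℝ)^(n+1-(i+1))) • (s^(i+1) * (star p)^(n+1-(i+1)))
        = ((n.choose i : ℝ) * (-1:ℝ)^(n-i)) • (s^(i+1) * (star p)^(n-i))
          + ((n.choose (i+1) : ℝ) * (-1:ℝ)^(n-i)) • (s^(i+1) * (star p)^(n-i)) := by
      intro i hi
      have : n+1-(i+1) = n-i := by omega
      rw [this, Nat.choose_succ_succ]
      push_cast
      rw [add_mul, add_smul]
    rw [Finset.sum_congr rfl e1, Finset.sum_add_distrib]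
    -- first piece equals s * sum
    have e2 : ∑ i ∈ Finset.range (n+1), ((n.choose i : ℝ) * (-1:ℝ)^(n-i)) • (s^(i+1) * (star p)^(n-i))
        = ∑ i ∈ Finset.range (n+1), s * (((n.choose i : ℝ) * (-1:ℝ)^(n-i)) • (s^i * (star p)^(n-i))) := by
      refine Finset.sum_congr rfl fun i hi => ?_
      rw [mul_smul_comm, ← mul_assoc, ← pow_succ']
    have e3 : (∑ i ∈ Finset.range (n+1), ((n.choose (i+1) : ℝ) * (-1:ℝ)^(n-i)) • (s^(i+1) * (star p)^(n-i)))
          + (((n+1).choose 0 : ℝ) * (-1:ℝ)^(n+1-0)) • (s^0 * (star p)^(n+1-0))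
        = ∑ k ∈ Finset.range (n+1), -((((n.choose k : ℝ) * (-1:ℝ)^(n-k)) • (s^k * (star p)^(n-k))) * star p) := by
      rw [Finset.sum_range_succ, Finset.sum_range_succ'
        (fun k => -((((n.choose k : ℝ) * (-1:ℝ)^(n-k)) • (s^k * (star p)^(n-k))) * star p))]
      simp only [Nat.choose_succ_self, Nat.cast_zero, zero_mul, zero_smul, add_zero,
        Nat.choose_zero_right, Nat.cast_one, one_mul, Nat.sub_zero, pow_zero]
      congr 1
      · refine Finset.sum_congr rfl fun i hi => ?_
        rw [Finset.mem_range] at hi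
        have h1 : n - (i+1) + 1 = n - i := by omega
        have h2 : (-1:ℝ)^(n-i) = (-1:ℝ)^(n-(i+1)) * (-1) := by rw [← pow_succ, h1]
        rw [h2, smul_mul_assoc, mul_assoc, ← pow_succ (star p) (n-(i+1)), h1,
          show ((n.choose (i+1):ℝ)) * ((-1:ℝ)^(n-(i+1)) * (-1))
            = -((n.choose (i+1):ℝ) * (-1:ℝ)^(n-(i+1))) from by ring, neg_smul]
      · rw [smul_mul_assoc, ← pow_succ, pow_succ ((-1:ℝ)) n, mul_neg_one, neg_smul]
    rw [e2, add_assoc, e3, Finset.sum_neg_distrib, ← sub_eq_add_neg]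

lemma hasDerivAt_coeq (t : ℝ) : HasDerivAt (fun t : ℝ => ((t : ℝ) : ℍ[ℝ])) 1 t := by
  have h : (fun t : ℝ => ((t : ℝ) : ℍ[ℝ])) = fun t : ℝ => t • (1 : ℍ[ℝ]) := by
    funext u
    ext <;> simp
  rw [h]
  simpa using (hasDerivAt_id t).smul_const (1 : ℍ[ℝ])

lemma hasDerivAt_qt (q : ℍ[ℝ]) (t : ℝ) :
    HasDerivAt (fun t : ℝ => q + ((t : ℝ) : ℍ[ℝ])) 1 t := by
  simpa using (hasDerivAt_coeq t).const_add q

lemma contDiff_coeq : ContDiff ℝ (⊤ : ℕ∞) (fun t : ℝ => ((t : ℝ) : ℍ[ℝ])) := by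
  have h : (fun t : ℝ => ((t : ℝ) : ℍ[ℝ])) = fun t : ℝ => t • (1 : ℍ[ℝ]) := by
    funext u
    ext <;> simp
  rw [h]
  exact contDiff_id.smul contDiff_const

lemma contDiff_qt (q : ℍ[ℝ]) : ContDiff ℝ (⊤ : ℕ∞) (fun t : ℝ => q + ((t : ℝ) : ℍ[ℝ])) :=
  contDiff_const.add contDiff_coeq

lemma hasDerivAt_Bq (p q : ℍ[ℝ]) (t : ℝ) :
    HasDerivAt (fun t : ℝ => Bq p (q + ((t : ℝ) : ℍ[ℝ])))
      (2 * (q + ((t : ℝ) : ℍ[ℝ])) - 2 * ((p.re : ℝ) : ℍ[ℝ])) t := by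
  have h1 := ((hasDerivAt_qt q t).mul (hasDerivAt_qt q t)).sub
    ((hasDerivAt_qt q t).const_mul (2 * ((p.re : ℝ) : ℍ[ℝ])))
  have h2 := h1.add_const ((‖p‖ ^ 2 : ℝ) : ℍ[ℝ])
  have h3 : (fun t : ℝ => (q + ((t : ℝ) : ℍ[ℝ])) * (q + ((t : ℝ) : ℍ[ℝ]))
      - 2 * ((p.re : ℝ) : ℍ[ℝ]) * (q + ((t : ℝ) : ℍ[ℝ])) + ((‖p‖ ^ 2 : ℝ) : ℍ[ℝ]))
      = fun t : ℝ => Bq p (q + ((t : ℝ) : ℍ[ℝ])) := by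
    funext u; rw [Bq, ← pow_two]
  change HasDerivAt (fun t : ℝ => (q + ((t : ℝ) : ℍ[ℝ])) * (q + ((t : ℝ) : ℍ[ℝ]))
      - 2 * ((p.re : ℝ) : ℍ[ℝ]) * (q + ((t : ℝ) : ℍ[ℝ])) + ((‖p‖ ^ 2 : ℝ) : ℍ[ℝ])) _ t at h2
  rw [h3] at h2
  refine h2.congr_deriv (Eq.symm ?_)
  ext <;> simp <;> ring

lemma contDiff_Bq (p q : ℍ[ℝ]) : ContDiff ℝ (⊤ : ℕ∞) (fun t : ℝ => Bq p (q + ((t : ℝ) : ℍ[ℝ]))) := by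
  unfold Bq
  exact (((contDiff_qt q).pow 2).sub (contDiff_const.mul (contDiff_qt q))).add contDiff_const
lemma hasDerivAt_Pst (p q : ℍ[ℝ]) (n : ℕ) (t : ℝ) :
    HasDerivAt (fun t : ℝ => Pst p (n+1) (q + ((t : ℝ) : ℍ[ℝ])))
      (((n : ℝ) + 1) • Pst p n (q + ((t : ℝ) : ℍ[ℝ]))) t := by
  induction n with
  | zero =>
    have h1 := ((hasDerivAt_qt q t).mul_const (1 : ℍ[ℝ])).sub_const ((1 : ℍ[ℝ]) * star p)
    have h2 : (fun t : ℝ => (q + ((t : ℝ) : ℍ[ℝ])) * (1 : ℍ[ℝ]) - (1 : ℍ[ℝ]) * star p)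
        = fun t : ℝ => Pst p 1 (q + ((t : ℝ) : ℍ[ℝ])) := rfl
    rw [h2] at h1
    simpa [Pst] using h1
  | succ n ih =>
    have h1 := ((hasDerivAt_qt q t).mul ih).sub (ih.mul_const (star p))
    have h2 : (fun t : ℝ => (q + ((t : ℝ) : ℍ[ℝ])) * Pst p (n+1) (q + ((t : ℝ) : ℍ[ℝ]))
        - Pst p (n+1) (q + ((t : ℝ) : ℍ[ℝ])) * star p)
        = fun t : ℝ => Pst p (n+2) (q + ((t : ℝ) : ℍ[ℝ])) := rfl
    change HasDerivAt (fun t : ℝ => (q + ((t : ℝ) : ℍ[ℝ])) * Pst p (n+1) (q + ((t : ℝ) : ℍ[ℝ]))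
          - Pst p (n+1) (q + ((t : ℝ) : ℍ[ℝ])) * star p) _ t at h1
    rw [h2] at h1
    refine h1.congr_deriv (Eq.symm ?_)
    set s : ℍ[ℝ] := q + ((t : ℝ) : ℍ[ℝ])
    push_cast
    rw [one_mul, mul_smul_comm, smul_mul_assoc,
        show Pst p (n+1) s = s * Pst p n s - Pst p n s * star p from rfl]
    module

lemma contDiff_Pst (p q : ℍ[ℝ]) (n : ℕ) :
    ContDiff ℝ (⊤ : ℕ∞) (fun t : ℝ => Pst p n (q + ((t : ℝ) : ℍ[ℝ]))) := by
  induction n with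
  | zero => exact contDiff_const
  | succ n ih =>
    show ContDiff ℝ (⊤ : ℕ∞) (fun t : ℝ => (q + ((t : ℝ) : ℍ[ℝ])) * Pst p n (q + ((t : ℝ) : ℍ[ℝ]))
      - Pst p n (q + ((t : ℝ) : ℍ[ℝ])) * star p)
    exact ((contDiff_qt q).mul ih).sub (ih.mul contDiff_const)

lemma hasDerivAt_pow_comm {f : ℝ → ℍ[ℝ]} {f' : ℍ[ℝ]} {t : ℝ} (hf : HasDerivAt f f' t)
    (hc : Commute (f t) f') (m : ℕ) :
    HasDerivAt (fun u => f u ^ (m+1)) (((m : ℝ) + 1) • (f t ^ m * f')) t := by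
  induction m with
  | zero => simpa using hf
  | succ m ih =>
    have h1 := ih.mul hf
    have h2 : (fun u => f u ^ (m+1) * f u) = fun u => f u ^ (m+2) := by
      funext u; rw [← pow_succ]
    change HasDerivAt (fun u => f u ^ (m+1) * f u) _ t at h1
    rw [h2] at h1
    refine h1.congr_deriv (Eq.symm ?_)
    rw [smul_mul_assoc, mul_assoc, hc.symm.eq, ← mul_assoc, ← pow_succ]
    push_cast
    module

lemma hasDerivAt_invq {f : ℝ → ℍ[ℝ]} {f' : ℍ[ℝ]} {t : ℝ} (hf : HasDerivAt f f' t)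
    (h0 : f t ≠ 0) :
    HasDerivAt (fun u => (f u)⁻¹) (-((f t)⁻¹ * f' * (f t)⁻¹)) t := by
  have h1 := (hasFDerivAt_inv' (𝕜 := ℝ) h0).comp_hasDerivAt t hf
  refine h1.congr_deriv ?_
  simp [ContinuousLinearMap.mulLeftRight_apply]
/-- The rescaled iterated derivative of the Cauchy kernel. -/
def Fq (p q : ℍ[ℝ]) (m : ℕ) (t : ℝ) : ℍ[ℝ] :=
  ((-1:ℝ)^(m+1) * (m.factorial : ℝ)) •
    (((Bq p (q + ((t:ℝ):ℍ[ℝ])))⁻¹) ^ (m+1) * Pst p (m+1) (q + ((t:ℝ):ℍ[ℝ])))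

lemma hasDerivAt_Fq (p q : ℍ[ℝ]) (m : ℕ) (t : ℝ)
    (h : Bq p (q + ((t:ℝ):ℍ[ℝ])) ≠ 0) :
    HasDerivAt (Fq p q m) (Fq p q (m+1) t) t := by
  have hBd := hasDerivAt_Bq p q t
  set s : ℍ[ℝ] := q + ((t:ℝ):ℍ[ℝ]) with hs
  set B : ℍ[ℝ] := Bq p s with hB
  set B' : ℍ[ℝ] := 2*s - 2*((p.re:ℝ):ℍ[ℝ]) with hB'
  set X : ℍ[ℝ] := B⁻¹ with hX
  have c1 : Commute B B' := commB p s
  have c2 : Commute X B' := c1.inv_left₀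
  have hXd : HasDerivAt (fun u : ℝ => (Bq p (q + ((u:ℝ):ℍ[ℝ])))⁻¹) (-(X * B' * X)) t :=
    hasDerivAt_invq hBd h
  have hcX : Commute X (-(X * B' * X)) :=
    (((Commute.refl X).mul_right c2).mul_right (Commute.refl X)).neg_right
  have hXp := hasDerivAt_pow_comm hXd hcX m
  have hPd := hasDerivAt_Pst p q m t
  have h1 := (hXp.mul hPd).const_smul ((-1:ℝ)^(m+1) * (m.factorial:ℝ))
  refine h1.congr_deriv (Eq.symm ?_)
  show ((-1:ℝ)^(m+1+1) * ((m+1).factorial : ℝ)) • (X ^ (m+2) * Pst p (m+2) s) = _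
  have red1 : X^m * (X*B'*X) = X^(m+2) * B' := by
    calc X^m * (X*B'*X) = X^m * (X * (B' * X)) := by rw [mul_assoc X B' X]
      _ = X^m * (X * (X * B')) := by rw [c2.symm.eq]
      _ = X^(m+2) * B' := by rw [← mul_assoc, ← mul_assoc, ← pow_succ, ← pow_succ]
  have red2 : X^(m+2) * B = X^(m+1) := by
    rw [pow_succ, mul_assoc, hX, inv_mul_cancel₀ h, mul_one]
  have key := Pst_key p s m
  rw [← hB', ← hB] at key
  rw [← key, mul_sub, ← mul_assoc, ← mul_assoc, red2, mul_neg, red1]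
  rw [smul_mul_assoc, neg_mul, mul_smul_comm]
  push_cast [Nat.factorial_succ]
  module

/-- The negative star power `(q−p)^{−n*}` equals
`((−1)ⁿ/(n−1)!) ∂_{q₀}^{n−1} S_L⁻¹(p,q)`. -/
theorem negative_star_power_eq_deriv_cauchy_kernel (p q : ℍ[ℝ]) (hq : q ∉ sphereOf p)
    (n : ℕ) (hn : 1 ≤ n) (g : ℝ → ℍ[ℝ])
    (hg : ∀ t : ℝ, g t = (p - star (q + (t : ℍ[ℝ]))) *
      (p ^ 2 - 2 * (((q + (t : ℍ[ℝ])).re : ℝ) : ℍ[ℝ]) * p +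
        ((‖q + (t : ℍ[ℝ])‖ ^ 2 : ℝ) : ℍ[ℝ]))⁻¹) :
    ContDiffAt ℝ (n - 1 : ℕ) g 0 ∧
    iteratedDeriv (n - 1) g 0 =
      ((-1 : ℝ) ^ n * ((n - 1).factorial : ℝ)) •
        (((q ^ 2 - 2 * (p.re : ℍ[ℝ]) * q + ((‖p‖ ^ 2 : ℝ) : ℍ[ℝ])) ^ n)⁻¹ *
          ∑ k ∈ Finset.range (n + 1),
            ((n.choose k : ℝ) * (-1 : ℝ) ^ (n - k)) • (q ^ k * (star p) ^ (n - k))) := by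
  obtain ⟨m, rfl⟩ : ∃ m, n = m + 1 := ⟨n - 1, by omega⟩
  simp only [Nat.add_sub_cancel]
  have hq0 : q + ((0:ℝ):ℍ[ℝ]) = q := by
    norm_num
  have hB00 : Bq p (q + ((0:ℝ):ℍ[ℝ])) ≠ 0 := by
    rw [hq0]
    intro h
    exact hq (mem_sphere_of_Bq p q h)
  have hU : ∀ᶠ t in nhds (0:ℝ), Bq p (q + ((t:ℝ):ℍ[ℝ])) ≠ 0 :=
    ((contDiff_Bq p q).continuous.continuousAt).eventually_ne hB00
  -- g agrees with Fq p q 0 near 0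
  have geqF : g =ᶠ[nhds (0:ℝ)] Fq p q 0 := by
    filter_upwards [hU] with t ht
    rw [hg t]
    have h1 : (p ^ 2 - 2 * (((q + ((t:ℝ):ℍ[ℝ])).re : ℝ) : ℍ[ℝ]) * p +
        ((‖q + ((t:ℝ):ℍ[ℝ])‖ ^ 2 : ℝ) : ℍ[ℝ])) = Bq (q + ((t:ℝ):ℍ[ℝ])) p := rfl
    rw [h1, kernel_identity p _ ht]
    show _ = ((-1:ℝ)^(0+1) * ((0:ℕ).factorial : ℝ)) •
      (((Bq p (q + ((t:ℝ):ℍ[ℝ])))⁻¹) ^ (0+1) *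
        ((q + ((t:ℝ):ℍ[ℝ])) * Pst p 0 (q + ((t:ℝ):ℍ[ℝ]))
          - Pst p 0 (q + ((t:ℝ):ℍ[ℝ])) * star p))
    show -((Bq p (q + ((t:ℝ):ℍ[ℝ])))⁻¹ * ((q + ((t:ℝ):ℍ[ℝ])) - star p)) =
      ((-1:ℝ)^(0+1) * ((0:ℕ).factorial : ℝ)) •
      (((Bq p (q + ((t:ℝ):ℍ[ℝ])))⁻¹) ^ (0+1) *
        ((q + ((t:ℝ):ℍ[ℝ])) * 1 - 1 * star p))
    rw [mul_one, one_mul, pow_one]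
    norm_num
  -- iterated derivatives of g agree with Fq p q m near 0
  have iterEq : ∀ k : ℕ, ∀ᶠ t in nhds (0:ℝ), iteratedDeriv k g t = Fq p q k t := by
    intro k
    induction k with
    | zero =>
      filter_upwards [geqF] with t ht
      simpa [iteratedDeriv_zero] using ht
    | succ k ih =>
      filter_upwards [ih.eventually_nhds, hU] with t h1 h2
      rw [iteratedDeriv_succ]
      have h3 : iteratedDeriv k g =ᶠ[nhds t] Fq p q k := h1
      rw [h3.deriv_eq, (hasDerivAt_Fq p q k t h2).deriv]
  constructor
  · -- smoothness
    have hinv : ContDiffAt ℝ (m:ℕ∞) (fun x : ℍ[ℝ] => x⁻¹) (Bq p (q + ((0:ℝ):ℍ[ℝ]))) := by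
      rw [← Ring.inverse_eq_inv']
      exact contDiffAt_ringInverse ℝ (Units.mk0 _ hB00)
    have h5 : ContDiffAt ℝ (m:ℕ∞) (fun t : ℝ => (Bq p (q + ((t:ℝ):ℍ[ℝ])))⁻¹) 0 :=
      ContDiffAt.comp 0 hinv ((contDiff_Bq p q).contDiffAt.of_le (mod_cast le_top))
    have h6 : ContDiffAt ℝ (m:ℕ∞) (Fq p q 0) 0 := by
      apply ContDiffAt.const_smul
      apply ContDiffAt.mul
      · simpa [pow_one] using h5
      · exact ((contDiff_Pst p q 1).contDiffAt.of_le (mod_cast le_top))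
    exact h6.congr_of_eventuallyEq geqF
  · -- value
    have h7 : iteratedDeriv m g 0 = Fq p q m 0 := (iterEq m).self_of_nhds
    rw [h7]
    show ((-1:ℝ)^(m+1) * (m.factorial : ℝ)) •
      (((Bq p (q + ((0:ℝ):ℍ[ℝ])))⁻¹) ^ (m+1) * Pst p (m+1) (q + ((0:ℝ):ℍ[ℝ]))) = _
    rw [hq0, inv_pow, Pst_eq_sum]
    rfl
end
end
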